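/- arXiv:1901.01112 — 4 statements merged into one kernel-verified Lean document; each statement's English description precedes it below -/
import Mathlib

section
/- Let q ∈ [1,∞) and let (w_n) be a sequence in L^q(I,E) such that the family {|w_n(·)|^q : n ∈ ℕ} is uniformly integrable and, for a.e. t ∈ I, the set {w_n(t) : n ∈ ℕ} is relatively compact in E. Then for every ε > 0 there exist a norm-compact set C ⊆ E and functions v_n ∈ L^q(I,E) with v_n(t) ∈ C for a.e. t ∈ I and ‖w_n − v_n‖_q < ε for every n ∈ ℕ. -/
open MeasureTheory Filter Topology Set
open scoped ENNReal NNReal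

noncomputable section

/-- The Lebesgue measure restricted to the interval `I = [0, T]`. -/
abbrev μI (T : ℝ) : MeasureTheory.Measure ℝ := MeasureTheory.volume.restrict (Set.Icc 0 T)

open Metric

/-!
By uniform integrability, `‖1_A wₙ‖_q ≤ ε / 2` for all `n` as soon as `|A| ≤ δ`, so it suffices to
find a compact `K` and a set `A` with `|A| ≤ δ` such that `wₙ(t) ∈ K` for all `n` and a.e. `t ∉ A`;
then `vₙ := 1_{Aᶜ} wₙ` takes values in `K ∪ {0}`. The values of all `wₙ` lie in the closure of a
sequence `(Dₖ)`. At a scale `r`, a.e. slice is covered by finitely many balls `B(Dₖ, r)`, `k < m`,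
and by continuity of the measure one `m` works outside a set of arbitrarily small measure. Doing
this at the scales `1 / (j + 1)` with exceptional measures summing to at most `δ` gives `A`, and
`K` is the intersection over `j` of the corresponding finite unions of closed balls, which is
closed and totally bounded.
-/

section CompactNets

variable {X : Type*} [PseudoMetricSpace X]

theorem isCompact_iInter_biUnion_closedBall [CompleteSpace X] {F : ℕ → Set X}
    (hF : ∀ j, (F j).Finite) {r : ℕ → ℝ} (hr : Tendsto r atTop (𝓝 0)) :
    IsCompact (⋂ j, ⋃ y ∈ F j, closedBall y (r j)) := by
  refine TotallyBounded.isCompact_of_isClosed ?_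
    (isClosed_iInter fun j => (hF j).isClosed_biUnion fun y _ => isClosed_closedBall)
  refine totallyBounded_iff.2 fun ε hε => ?_
  obtain ⟨j, hj⟩ := (hr.eventually (gt_mem_nhds hε)).exists
  refine ⟨F j, hF j, fun x hx => ?_⟩
  obtain ⟨y, hy, hxy⟩ := mem_iUnion₂.1 (mem_iInter.1 hx j)
  exact mem_iUnion₂.2 ⟨y, hy, (mem_closedBall.1 hxy).trans_lt hj⟩

theorem IsCompact.exists_subset_biUnion_closedBall_image_Iio {K : Set X} (hK : IsCompact K)
    {D : ℕ → X} (hKD : K ⊆ closure (range D)) {r : ℝ} (hr : 0 < r) :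
    ∃ m, K ⊆ ⋃ y ∈ D '' Iio m, closedBall y r := by
  have hcover : K ⊆ ⋃ k, ball (D k) r := fun x hx => by
    obtain ⟨_, ⟨k, rfl⟩, hxk⟩ := Metric.mem_closure_iff.1 (hKD hx) r hr
    exact mem_iUnion.2 ⟨k, mem_ball.2 hxk⟩
  obtain ⟨s, hs⟩ := hK.elim_finite_subcover _ (fun k => isOpen_ball) hcover
  obtain ⟨m, hm⟩ := s.exists_nat_subset_range
  refine ⟨m, hs.trans (iUnion₂_subset fun k hk => ?_)⟩
  exact ball_subset_closedBall.trans (subset_biUnion_of_mem (u := fun y => closedBall y r)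
    (mem_image_of_mem D (Finset.mem_range.1 (hm hk))))

end CompactNets

section SliceCompactness

variable {α X : Type*} [MeasurableSpace α] {μ : Measure α} [PseudoMetricSpace X] {g : ℕ → α → X}

theorem measurableSet_setOf_forall_mem (hg : ∀ n, StronglyMeasurable (g n)) {s : Set X}
    (hs : IsClosed s) : MeasurableSet {t | ∀ n, g n t ∈ s} := by
  borelize X
  rw [ofPred_forall]
  exact .iInter fun n => (hg n).measurable hs.measurableSet

theorem exists_finite_measure_compl_setOf_forall_mem_biUnion_closedBall_lt [IsFiniteMeasure μ]
    (hg : ∀ n, StronglyMeasurable (g n))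
    (hK : ∀ᵐ t ∂μ, IsCompact (closure (range fun n => g n t))) {r : ℝ} (hr : 0 < r)
    {η : ℝ≥0∞} (hη : 0 < η) :
    ∃ F : Set X, F.Finite ∧ μ {t | ∀ n, g n t ∈ ⋃ y ∈ F, closedBall y r}ᶜ < η := by
  rcases isEmpty_or_nonempty X with _ | _
  · have : IsEmpty α := ⟨fun t => isEmptyElim (g 0 t)⟩
    exact ⟨∅, finite_empty, by simpa [eq_empty_of_isEmpty] using hη⟩
  obtain ⟨c, hc, hgc⟩ := TopologicalSpace.IsSeparable.iUnion fun n => (hg n).isSeparable_range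
  obtain ⟨D, hcD⟩ := countable_iff_exists_subset_range.1 hc
  set S : ℕ → Set α := fun m => {t | ∀ n, g n t ∈ ⋃ y ∈ D '' Iio m, closedBall y r}
  have hS_meas : ∀ m, MeasurableSet (S m) := fun m =>
    measurableSet_setOf_forall_mem hg
      (((finite_Iio m).image D).isClosed_biUnion fun _ _ => isClosed_closedBall)
  have hS_anti : Antitone fun m => (S m)ᶜ := fun m m' hmm' =>
    compl_subset_compl.2 fun t ht n => biUnion_subset_biUnion_left
      (image_mono (Iio_subset_Iio hmm')) (ht n)
  have hS_null : μ (⋂ m, (S m)ᶜ) = 0 := by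
    refine compl_mem_ae_iff.1 ?_
    filter_upwards [hK] with t ht
    have hslice : closure (range fun n => g n t) ⊆ closure (range D) :=
      closure_minimal (by
        rintro _ ⟨n, rfl⟩
        exact closure_mono hcD (hgc (mem_iUnion.2 ⟨n, mem_range_self t⟩))) isClosed_closure
    obtain ⟨m, hm⟩ := ht.exists_subset_biUnion_closedBall_image_Iio hslice hr
    simp only [compl_iInter, compl_compl, mem_iUnion]
    exact ⟨m, fun n => hm (subset_closure (mem_range_self n))⟩
  have hlim := tendsto_measure_iInter_atTop (fun m => (hS_meas m).compl.nullMeasurableSet)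
    hS_anti ⟨0, measure_ne_top μ _⟩
  rw [hS_null] at hlim
  obtain ⟨m, hm⟩ := (hlim.eventually_lt_const hη).exists
  exact ⟨_, (finite_Iio m).image D, hm⟩

theorem exists_isCompact_measure_le_forall_mem [CompleteSpace X] [IsFiniteMeasure μ]
    (hg : ∀ n, StronglyMeasurable (g n))
    (hK : ∀ᵐ t ∂μ, IsCompact (closure (range fun n => g n t))) {δ : ℝ≥0∞} (hδ : δ ≠ 0) :
    ∃ K, IsCompact K ∧ ∃ A, MeasurableSet A ∧ μ A ≤ δ ∧ ∀ t ∉ A, ∀ n, g n t ∈ K := by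
  obtain ⟨η, hη_pos, hη_sum⟩ := ENNReal.exists_pos_sum_of_countable hδ ℕ
  choose F hF_fin hF using fun j : ℕ =>
    exists_finite_measure_compl_setOf_forall_mem_biUnion_closedBall_lt hg hK
      (Nat.one_div_pos_of_nat (α := ℝ) (n := j)) (ENNReal.coe_pos.2 (hη_pos j))
  refine ⟨_, isCompact_iInter_biUnion_closedBall hF_fin tendsto_one_div_add_atTop_nhds_zero_nat,
    ⋃ j, {t | ∀ n, g n t ∈ ⋃ y ∈ F j, closedBall y (1 / (j + 1 : ℝ))}ᶜ, ?_, ?_, ?_⟩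
  · exact .iUnion fun j => (measurableSet_setOf_forall_mem hg
      ((hF_fin j).isClosed_biUnion fun _ _ => isClosed_closedBall)).compl
  · calc μ _ ≤ ∑' j, μ {t | ∀ n, g n t ∈ ⋃ y ∈ F j, closedBall y (1 / (j + 1 : ℝ))}ᶜ :=
          measure_iUnion_le _
      _ ≤ ∑' j, (η j : ℝ≥0∞) := ENNReal.tsum_le_tsum fun j => (hF j).le
      _ ≤ δ := hη_sum.le
  · intro t ht n
    rw [mem_iUnion, not_exists] at ht
    exact mem_iInter.2 fun j => not_not.1 (ht j) n

theorem exists_isCompact_measure_le_ae_forall_mem [CompleteSpace X] [IsFiniteMeasure μ]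
    (hg : ∀ n, AEStronglyMeasurable (g n) μ)
    (hK : ∀ᵐ t ∂μ, IsCompact (closure (range fun n => g n t))) {δ : ℝ≥0∞} (hδ : δ ≠ 0) :
    ∃ K, IsCompact K ∧ ∃ A, MeasurableSet A ∧ μ A ≤ δ ∧ ∀ᵐ t ∂μ, t ∉ A → ∀ n, g n t ∈ K := by
  have hg_ae : ∀ᵐ t ∂μ, ∀ n, g n t = (hg n).mk _ t := ae_all_iff.2 fun n => (hg n).ae_eq_mk
  have hK' : ∀ᵐ t ∂μ, IsCompact (closure (range fun n => (hg n).mk _ t)) := by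
    filter_upwards [hK, hg_ae] with t ht hgt
    simpa only [hgt] using ht
  obtain ⟨K, hK, A, hA, hAδ, hAK⟩ :=
    exists_isCompact_measure_le_forall_mem (fun n => (hg n).stronglyMeasurable_mk) hK' hδ
  refine ⟨K, hK, A, hA, hAδ, ?_⟩
  filter_upwards [hg_ae] with t hgt htA n
  exact hgt n ▸ hAK t htA n

end SliceCompactness

theorem MeasureTheory.Lp.norm_sub_toLp_indicator_compl {α E : Type*} [MeasurableSpace α]
    {μ : Measure α} [NormedAddCommGroup E] {p : ℝ≥0∞} [Fact (1 ≤ p)] (f : Lp E p μ) {A : Set α}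
    (hA : MeasurableSet A) :
    ‖f - ((Lp.memLp f).indicator hA.compl).toLp _‖ = (eLpNorm (A.indicator f) p μ).toReal := by
  rw [Lp.norm_def]
  congr 1
  refine eLpNorm_congr_ae ?_
  have hmem := (Lp.memLp f).indicator hA.compl
  filter_upwards [Lp.coeFn_sub f (hmem.toLp _), hmem.coeFn_toLp] with t hsub hind
  rw [hsub, Pi.sub_apply, hind, indicator_compl, Pi.sub_apply, sub_sub_cancel]

theorem statement4_general {E : Type*} [NormedAddCommGroup E] [CompleteSpace E]
    (T : ℝ) (q : ℝ≥0∞) [Fact (1 ≤ q)]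
    (w : ℕ → Lp E q (μI T))
    (hui : UniformIntegrable (fun n => ((w n : Lp E q (μI T)) : ℝ → E)) q (μI T))
    (hslice : ∀ᵐ t ∂(μI T), IsCompact (closure (Set.range fun n => w n t))) :
    ∀ ε > (0:ℝ), ∃ C : Set E, IsCompact C ∧ ∃ v : ℕ → Lp E q (μI T),
      ∀ n, (∀ᵐ t ∂(μI T), v n t ∈ C) ∧ ‖w n - v n‖ < ε := by
  intro ε hε
  obtain ⟨δ, hδ, hsmall⟩ := hui.unifIntegrable (half_pos hε)
  obtain ⟨K, hK, A, hA, hAδ, hAK⟩ := exists_isCompact_measure_le_ae_forall_mem (g := fun n => w n)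
    (fun n => Lp.aestronglyMeasurable (w n)) hslice (ENNReal.ofReal_pos.2 hδ).ne'
  have hmem : ∀ n, MemLp (Aᶜ.indicator (w n)) q (μI T) :=
    fun n => (Lp.memLp (w n)).indicator hA.compl
  refine ⟨insert 0 K, hK.insert 0, fun n => (hmem n).toLp _, fun n => ⟨?_, ?_⟩⟩
  · filter_upwards [(hmem n).coeFn_toLp, hAK] with t hv htK
    rw [hv]
    by_cases ht : t ∈ A
    · rw [indicator_of_notMem (notMem_compl_iff.2 ht)]
      exact mem_insert _ _
    · rw [indicator_of_mem ht]
      exact mem_insert_of_mem _ (htK ht n)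
  · rw [Lp.norm_sub_toLp_indicator_compl _ hA]
    calc _ ≤ ε / 2 := ENNReal.toReal_le_of_le_ofReal (half_pos hε).le (hsmall n A hA hAδ)
      _ < ε := half_lt_self hε

/-- if `(wₙ) ⊆ L^q(I,E)` is a uniformly `q`-integrable sequence whose slices
`{wₙ(t) : n ∈ ℕ}` are a.e. relatively compact, then for every `ε > 0` there exist a norm-compact
set `C ⊆ E` and functions `vₙ ∈ L^q(I,E)` with values a.e. in `C` such that `‖wₙ − vₙ‖_q < ε`
for every `n`. -/
theorem statement4 {E : Type*} [NormedAddCommGroup E] [NormedSpace ℝ E] [CompleteSpace E]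
    (T : ℝ) (hT : 0 < T) (q : ℝ≥0∞) [Fact (1 ≤ q)] (hq : q ≠ ∞)
    (w : ℕ → Lp E q (μI T))
    (hui : UniformIntegrable (fun n => ((w n : Lp E q (μI T)) : ℝ → E)) q (μI T))
    (hslice : ∀ᵐ t ∂(μI T), IsCompact (closure (Set.range fun n => w n t))) :
    ∀ ε > (0:ℝ), ∃ C : Set E, IsCompact C ∧ ∃ v : ℕ → Lp E q (μI T),
      ∀ n, (∀ᵐ t ∂(μI T), v n t ∈ C) ∧ ‖w n - v n‖ < ε :=
  statement4_general T q w hui hslice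
end
end

section
/- Let E be a real normed space, X ⊆ E, U relatively open in X, x₀ ∈ U, and F : closure(U) ⊸ X a set-valued map. If the Krasnosel'skii–Altman condition holds, namely |y − x|² ≥ |y − x₀|² − |x − x₀|² for every x ∈ closure(U)∖U and every y ∈ F(x), then the Leray–Schauder boundary condition holds: for every λ ∈ (0,1) and every x ∈ closure(U)∖U one has x ∉ (1−λ)x₀ + λF(x). -/
open Set Topology

/-- the Krasnosel'skii–Altman boundary condition implies the Leray–Schauder
boundary condition. Here `U` is relatively open in `X ⊆ E`, `closure U ∩ X` plays the role of
the closure of `U` in `X`, and `F` is a set-valued map. -/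
theorem statement7 {E : Type*} [NormedAddCommGroup E] [NormedSpace ℝ E]
    (X : Set E) (U : Set E) (hUX : U ⊆ X) (hUopen : ∃ V : Set E, IsOpen V ∧ U = V ∩ X)
    (x₀ : E) (hx₀ : x₀ ∈ U) (F : E → Set E)
    (hKA : ∀ x ∈ (closure U ∩ X) \ U, ∀ y ∈ F x,
      ‖y - x‖ ^ 2 ≥ ‖y - x₀‖ ^ 2 - ‖x - x₀‖ ^ 2) :
    ∀ lam : ℝ, lam ∈ Set.Ioo (0:ℝ) 1 → ∀ x ∈ (closure U ∩ X) \ U,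
      x ∉ (fun y => (1 - lam) • x₀ + lam • y) '' F x := by
  rintro lam ⟨hl0, hl1⟩ x hx ⟨y, hyF, hxy⟩
  have hKA' := hKA x hx y hyF
  have h1 : y - x = (1 - lam) • (y - x₀) := by
    rw [← hxy]; simp [smul_sub, sub_smul]; abel
  have h2 : x - x₀ = lam • (y - x₀) := by
    rw [← hxy]; simp [smul_sub, sub_smul]; abel
  rw [h1, h2, norm_smul, norm_smul] at hKA'
  have hl0' : (0:ℝ) < 1 - lam := by linarith
  rw [Real.norm_of_nonneg hl0'.le, Real.norm_of_nonneg hl0.le] at hKA'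
  have hsq : ‖y - x₀‖ ^ 2 ≤ 0 := by nlinarith [mul_pos hl0 hl0']
  have hn : ‖y - x₀‖ = 0 := by
    have := le_antisymm hsq (sq_nonneg _)
    exact pow_eq_zero_iff (by norm_num) |>.mp this
  have hyx : y = x₀ := by rwa [← sub_eq_zero, ← norm_eq_zero]
  have hx0 : x = x₀ := by
    have h3 : x - x₀ = 0 := by rw [h2, hyx]; simp
    exact sub_eq_zero.mp h3
  exact hx.2 (hx0 ▸ hx₀)
end

section
/- Let 1 ≤ q ≤ p < ∞ with conjugate exponent r of q, E a real Banach space, h ∈ L^p(I,E), and let the kernel k : I×I → 𝓛(E) satisfy (κ1)–(κ3). Then the Hammerstein integral operator K : L^q(I,E) → L^p(I,E), K(w)(t) := h(t) + ∫₀ᵀ k(t,s)w(s) ds, is well defined and satisfies ‖K(w₁) − K(w₂)‖_{L^p} ≤ ‖t ↦ ‖k(t,·)‖_{L^r}‖_{L^p}·‖w₁ − w₂‖_{L^q} for all w₁, w₂ ∈ L^q(I,E). -/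
open MeasureTheory Filter Topology Set
open scoped ENNReal NNReal

noncomputable section

/-- The weak topology on a real normed space, i.e. the topology induced by all continuous
linear functionals. -/
def weakTop (X : Type*) [NormedAddCommGroup X] [NormedSpace ℝ X] : TopologicalSpace X :=
  TopologicalSpace.induced (fun (x : X) (φ : X →L[ℝ] ℝ) => φ x) Pi.topologicalSpace

/-- Weak convergence of a sequence in a real normed space. -/
def WeakConv {X : Type*} [NormedAddCommGroup X] [NormedSpace ℝ X] (w : ℕ → X) (x : X) : Prop :=
  ∀ φ : X →L[ℝ] ℝ, Tendsto (fun n => φ (w n)) atTop (𝓝 (φ x))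

variable {E : Type*} [NormedAddCommGroup E] [NormedSpace ℝ E]
/-- The norm `‖ t ↦ ‖k(t,·)‖_{L^r} ‖_{L^p}` of a kernel `k : I × I → 𝓛(E)`. -/
def kNorm (T : ℝ) (k : ℝ → ℝ → E →L[ℝ] E) (p r : ℝ≥0∞) : ℝ :=
  (eLpNorm (fun t => (eLpNorm (k t) r (μI T)).toReal) p (μI T)).toReal

/-- Kernel conditions (κ1)–(κ3): `k` is strongly measurable on the product, `k(t,·) ∈ L^r` for
every `t ∈ I`, and `t ↦ ‖k(t,·)‖_{L^r}` belongs to `L^p`. -/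
def CondK (T : ℝ) (k : ℝ → ℝ → E →L[ℝ] E) (p r : ℝ≥0∞) : Prop :=
  AEStronglyMeasurable (Function.uncurry k) ((μI T).prod (μI T)) ∧
  (∀ t ∈ Set.Icc (0:ℝ) T, MemLp (k t) r (μI T)) ∧
  MemLp (fun t => (eLpNorm (k t) r (μI T)).toReal) p (μI T)

/-- The Hausdorff measure of noncompactness of `Ω` relative to `E₀`:
the infimum of all `ε > 0` such that `Ω` admits a finite cover by open balls of radius `ε`
centered in `E₀`. -/
def relMNC (E₀ Ω : Set E) : ℝ :=
  sInf {ε : ℝ | 0 < ε ∧ ∃ s : Finset E, ↑s ⊆ E₀ ∧ Ω ⊆ ⋃ x ∈ s, Metric.ball x ε}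

/-!
Hölder's inequality in `s` gives `‖∫ k(t,s) w(s) ds‖ ≤ ‖k(t,·)‖_{L^r} ‖w‖_{L^q}` for almost
every `t`; taking the `L^p` norm in `t` yields
`‖∫ k(·,s) w(s) ds‖_{L^p} ≤ ‖t ↦ ‖k(t,·)‖_{L^r}‖_{L^p} ‖w‖_{L^q}`.
Since the integral operator is linear in `w`, this bound gives both the well-definedness of `K`
and its Lipschitz estimate.
-/

section HammersteinIntegral

variable {α β F : Type*} [MeasurableSpace α] [MeasurableSpace β] {μ : Measure α} {ν : Measure β}
  [NormedAddCommGroup F] [NormedSpace ℝ F] {p q r : ℝ≥0∞}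

theorem MeasureTheory.AEStronglyMeasurable.clm_apply {K : β → E →L[ℝ] F} {u : β → E}
    (hK : AEStronglyMeasurable K ν) (hu : AEStronglyMeasurable u ν) :
    AEStronglyMeasurable (fun s => K s (u s)) ν :=
  isBoundedBilinearMap_apply.continuous.comp_aestronglyMeasurable (hK.prodMk hu)

theorem eLpNorm_one_clm_apply_le [ENNReal.HolderConjugate r q] {K : β → E →L[ℝ] F} {u : β → E}
    (hK : AEStronglyMeasurable K ν) (hu : AEStronglyMeasurable u ν) :
    eLpNorm (fun s => K s (u s)) 1 ν ≤ eLpNorm K r ν * eLpNorm u q ν := by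
  simpa using eLpNorm_le_eLpNorm_mul_eLpNorm'_of_norm (p := r) (q := q) (r := 1) hK hu
    (fun A x => A x) 1 (Eventually.of_forall fun s => by simpa using (K s).le_opNorm (u s))

theorem MeasureTheory.MemLp.integrable_clm_apply [ENNReal.HolderConjugate r q] {K : β → E →L[ℝ] F}
    {u : β → E} (hK : MemLp K r ν) (hu : MemLp u q ν) :
    Integrable (fun s => K s (u s)) ν := by
  refine memLp_one_iff_integrable.mp
    ⟨hK.aestronglyMeasurable.clm_apply hu.aestronglyMeasurable, ?_⟩
  exact (eLpNorm_one_clm_apply_le hK.1 hu.1).trans_lt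
    (ENNReal.mul_lt_top hK.eLpNorm_lt_top hu.eLpNorm_lt_top)

theorem norm_integral_clm_apply_le [ENNReal.HolderConjugate r q] {K : β → E →L[ℝ] F}
    {u : β → E} (hK : MemLp K r ν) (hu : MemLp u q ν) :
    ‖∫ s, K s (u s) ∂ν‖ ≤ (eLpNorm K r ν).toReal * (eLpNorm u q ν).toReal := by
  rw [← ENNReal.toReal_mul, ← toReal_enorm]
  refine ENNReal.toReal_mono (ENNReal.mul_lt_top hK.eLpNorm_lt_top hu.eLpNorm_lt_top).ne ?_
  calc ‖∫ s, K s (u s) ∂ν‖ₑ ≤ eLpNorm (fun s => K s (u s)) 1 ν := by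
        rw [eLpNorm_one_eq_lintegral_enorm]
        exact enorm_integral_le_lintegral_enorm _
    _ ≤ eLpNorm K r ν * eLpNorm u q ν := eLpNorm_one_clm_apply_le hK.1 hu.1

theorem integral_clm_apply_sub [ENNReal.HolderConjugate r q] {K : β → E →L[ℝ] F}
    {u₁ u₂ : β → E} (hK : MemLp K r ν) (hu₁ : MemLp u₁ q ν) (hu₂ : MemLp u₂ q ν) :
    ∫ s, K s (u₁ s - u₂ s) ∂ν = ∫ s, K s (u₁ s) ∂ν - ∫ s, K s (u₂ s) ∂ν := by
  simp_rw [map_sub]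
  exact integral_sub (hK.integrable_clm_apply hu₁) (hK.integrable_clm_apply hu₂)

theorem eLpNorm_integral_clm_apply_le [ENNReal.HolderConjugate r q] {k : α → β → E →L[ℝ] F}
    (hk : ∀ᵐ t ∂μ, MemLp (k t) r ν) {u : β → E} (hu : MemLp u q ν) :
    eLpNorm (fun t => ∫ s, k t s (u s) ∂ν) p μ ≤
      ENNReal.ofReal (eLpNorm u q ν).toReal *
        eLpNorm (fun t => (eLpNorm (k t) r ν).toReal) p μ := by
  refine eLpNorm_le_mul_eLpNorm_of_ae_le_mul ?_ p
  filter_upwards [hk] with t hkt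
  rw [Real.norm_of_nonneg ENNReal.toReal_nonneg, mul_comm]
  exact norm_integral_clm_apply_le hkt hu

theorem MeasureTheory.AEStronglyMeasurable.integral_clm_apply [SFinite ν] {k : α → β → E →L[ℝ] F}
    (hk : AEStronglyMeasurable (Function.uncurry k) (μ.prod ν)) {u : β → E}
    (hu : AEStronglyMeasurable u ν) :
    AEStronglyMeasurable (fun t => ∫ s, k t s (u s) ∂ν) μ :=
  (hk.clm_apply hu.comp_snd).integral_prod_right'

theorem memLp_integral_clm_apply [SFinite ν] [ENNReal.HolderConjugate r q]
    {k : α → β → E →L[ℝ] F} (hk_meas : AEStronglyMeasurable (Function.uncurry k) (μ.prod ν))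
    (hk : ∀ᵐ t ∂μ, MemLp (k t) r ν) (hk_norm : MemLp (fun t => (eLpNorm (k t) r ν).toReal) p μ)
    {u : β → E} (hu : MemLp u q ν) :
    MemLp (fun t => ∫ s, k t s (u s) ∂ν) p μ :=
  ⟨hk_meas.integral_clm_apply hu.1, (eLpNorm_integral_clm_apply_le hk hu).trans_lt
    (ENNReal.mul_lt_top ENNReal.ofReal_lt_top hk_norm.eLpNorm_lt_top)⟩

end HammersteinIntegral

theorem statement16_general
    (T : ℝ) (p q r : ℝ≥0∞) (hr : q⁻¹ + r⁻¹ = 1)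
    (k : ℝ → ℝ → E →L[ℝ] E) (hk : CondK T k p r)
    (h : Lp E p (μI T)) :
    (∀ w : Lp E q (μI T),
      MemLp (fun t => h t + ∫ s, (k t s) (w s) ∂(μI T)) p (μI T)) ∧
    (∀ w₁ w₂ : Lp E q (μI T),
      eLpNorm (fun t => (h t + ∫ s, (k t s) (w₁ s) ∂(μI T)) -
          (h t + ∫ s, (k t s) (w₂ s) ∂(μI T))) p (μI T) ≤
        ENNReal.ofReal (kNorm T k p r * ‖w₁ - w₂‖)) := by
  obtain ⟨hk_meas, hk_mem, hk_norm⟩ := hk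
  have : ENNReal.HolderConjugate r q := ENNReal.holderConjugate_iff.mpr (by rwa [add_comm])
  have hk_ae : ∀ᵐ t ∂(μI T), MemLp (k t) r (μI T) := by
    filter_upwards [ae_restrict_mem measurableSet_Icc] with t ht using hk_mem t ht
  refine ⟨fun w => (Lp.memLp h).add (memLp_integral_clm_apply hk_meas hk_ae hk_norm (Lp.memLp w)),
    fun w₁ w₂ => ?_⟩
  have hdiff : (fun t => (h t + ∫ s, (k t s) (w₁ s) ∂(μI T)) -
      (h t + ∫ s, (k t s) (w₂ s) ∂(μI T))) =ᵐ[μI T]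
        fun t => ∫ s, k t s ((w₁ - w₂ : Lp E q (μI T)) s) ∂(μI T) := by
    filter_upwards [hk_ae] with t hkt
    rw [add_sub_add_left_eq_sub, ← integral_clm_apply_sub hkt (Lp.memLp w₁) (Lp.memLp w₂)]
    exact integral_congr_ae (by filter_upwards [Lp.coeFn_sub w₁ w₂] with s hs; rw [hs]; rfl)
  rw [eLpNorm_congr_ae hdiff, kNorm, Lp.norm_def, mul_comm,
    ENNReal.ofReal_mul ENNReal.toReal_nonneg, ENNReal.ofReal_toReal hk_norm.eLpNorm_lt_top.ne]
  exact eLpNorm_integral_clm_apply_le hk_ae (Lp.memLp (w₁ - w₂))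

/-- the Hammerstein integral operator
`K(w)(t) = h(t) + ∫₀ᵀ k(t,s) w(s) ds` is a well-defined map `L^q(I,E) → L^p(I,E)` and is
Lipschitz with constant `‖t ↦ ‖k(t,·)‖_{L^r}‖_{L^p}`. -/
theorem statement16 [CompleteSpace E]
    (T : ℝ) (hT : 0 < T) (p q r : ℝ≥0∞) [Fact (1 ≤ p)] [Fact (1 ≤ q)]
    (hp : p ≠ ∞) (hq : q ≠ ∞) (hqp : q ≤ p) (hr : q⁻¹ + r⁻¹ = 1)
    (k : ℝ → ℝ → E →L[ℝ] E) (hk : CondK T k p r)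
    (h : Lp E p (μI T)) :
    (∀ w : Lp E q (μI T),
      MemLp (fun t => h t + ∫ s, (k t s) (w s) ∂(μI T)) p (μI T)) ∧
    (∀ w₁ w₂ : Lp E q (μI T),
      eLpNorm (fun t => (h t + ∫ s, (k t s) (w₁ s) ∂(μI T)) -
          (h t + ∫ s, (k t s) (w₂ s) ∂(μI T))) p (μI T) ≤
        ENNReal.ofReal (kNorm T k p r * ‖w₁ - w₂‖)) :=
  statement16_general T p q r hr k hk h
end
end

section
/- Let 1 ≤ q ≤ p < ∞ with conjugate exponent r of q, E a real Banach space, h ∈ L^p(I,E), and let the kernel k : I×I → 𝓛(E) satisfy (κ1)–(κ3). Define K : L^q(I,E) → L^p(I,E) by K(w)(t) := h(t) + ∫₀ᵀ k(t,s)w(s) ds. If C ⊆ E is norm-compact, (w_n) ⊆ L^q(I,E) is a sequence with w_n(t) ∈ C for a.e. t ∈ I and every n, and w_n ⇀ w weakly in L^q(I,E), then K(w_n) → K(w) in the norm of L^p(I,E). -/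
open MeasureTheory Filter Topology Set
open scoped ENNReal NNReal

noncomputable section

variable {E : Type*} [NormedAddCommGroup E] [NormedSpace ℝ E]
/-!
For a.e. `t` we have `k(t,·) ∈ L^r`, so `u ↦ ∫ k(t,s) u(s) ds` is a bounded operator `L^q → E`
(the Hölder pairing) and the integrals `∫ k(t,s) wₙ(s) ds` converge weakly. They also stay in a
totally bounded set: approximating `k(t,·)` in `L¹` by a simple function `g` reduces this to sums
`∑ A (∫_{g = A} wₙ)`, whose terms lie in the compact sets `A '' ([0, T] • closedConvexHull C)`.
Weak convergence inside a relatively compact set is norm convergence, so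
`K(wₙ)(t) → K(w)(t)` for a.e. `t`; Hölder bounds `‖K(wₙ)(t) - K(w)(t)‖` by a constant times
`‖k(t,·)‖_r ∈ L^p(t)`, and dominated convergence in `L^p` finishes the proof.
-/

open scoped Pointwise

theorem totallyBounded_of_forall_approx {X : Type*} [PseudoMetricSpace X] {s : Set X}
    (h : ∀ ε > 0, ∃ t : Set X, TotallyBounded t ∧ ∀ x ∈ s, ∃ y ∈ t, dist x y < ε) :
    TotallyBounded s := by
  refine Metric.totallyBounded_iff.2 fun ε hε => ?_
  obtain ⟨t, ht, hst⟩ := h (ε / 2) (half_pos hε)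
  obtain ⟨c, hc, htc⟩ := Metric.totallyBounded_iff.1 ht (ε / 2) (half_pos hε)
  refine ⟨c, hc, fun x hx => ?_⟩
  obtain ⟨y, hy, hxy⟩ := hst x hx
  obtain ⟨z, hz, hyz⟩ := mem_iUnion₂.1 (htc hy)
  exact mem_iUnion₂.2 ⟨z, hz, Metric.mem_ball.2 <| by
    linarith [dist_triangle x y z, Metric.mem_ball.1 hyz]⟩

theorem tendsto_of_weakConv_of_totallyBounded [CompleteSpace E] {a : ℕ → E} {b : E} {S : Set E}
    (hS : TotallyBounded S) (ha : ∀ n, a n ∈ S) (hab : WeakConv a b) :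
    Tendsto a atTop (𝓝 b) := by
  refine (hS.closure.isCompact_of_isClosed isClosed_closure).tendsto_nhds_of_unique_mapClusterPt
    (Eventually.of_forall fun n => subset_closure (ha n)) fun x _ hx => ?_
  obtain ⟨ψ, hψ, hxψ⟩ := hx.tendsto_subseq
  exact SeparatingDual.eq_iff_forall_dual_eq.2 fun φ =>
    tendsto_nhds_unique ((φ.continuous.tendsto x).comp hxψ) ((hab φ).comp hψ.tendsto_atTop)

theorem IsCompact.closedConvexHull [CompleteSpace E] {C : Set E} (hC : IsCompact C) :
    IsCompact (closedConvexHull ℝ C) := by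
  rw [closedConvexHull_eq_closure_convexHull]
  exact (totallyBounded_convexHull.2 hC.totallyBounded).closure.isCompact_of_isClosed
    isClosed_closure

section Integrals

variable {α : Type*} [MeasurableSpace α] {μ : Measure α}

theorem unifIntegrable_of_dominated {ι β : Type*} [NormedAddCommGroup β] {p : ℝ≥0∞}
    (hp : 1 ≤ p) (hp' : p ≠ ∞) {F : ι → α → β} {g : α → ℝ} (hg : MemLp g p μ)
    (hFg : ∀ i, ∀ᵐ x ∂μ, ‖F i x‖ ≤ g x) :
    UnifIntegrable F p μ := by
  intro ε hε
  obtain ⟨δ, hδ, hgδ⟩ := unifIntegrable_const (ι := Unit) hp hp' hg hε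
  refine ⟨δ, hδ, fun i s hs hμs => (eLpNorm_mono_ae ?_).trans (hgδ () s hs hμs)⟩
  filter_upwards [hFg i] with x hx
  by_cases hxs : x ∈ s
  · simpa [indicator_of_mem hxs] using hx.trans (le_abs_self _)
  · simp [indicator_of_notMem hxs]

theorem tendsto_eLpNorm_zero_of_dominated {β : Type*} [NormedAddCommGroup β] [IsFiniteMeasure μ]
    {p : ℝ≥0∞} (hp : 1 ≤ p) (hp' : p ≠ ∞) {F : ℕ → α → β} {g : α → ℝ}
    (hF : ∀ n, AEStronglyMeasurable (F n) μ) (hg : MemLp g p μ) (hFg : ∀ n, ∀ᵐ x ∂μ, ‖F n x‖ ≤ g x)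
    (hlim : ∀ᵐ x ∂μ, Tendsto (fun n => F n x) atTop (𝓝 0)) :
    Tendsto (fun n => eLpNorm (F n) p μ) atTop (𝓝 0) := by
  simpa using tendsto_Lp_finite_of_tendsto_ae hp hp' hF (MemLp.zero (μ := μ))
    (unifIntegrable_of_dominated hp hp' hg hFg) hlim

theorem aestronglyMeasurable_integral_apply {β : Type*} [MeasurableSpace β] {ν : Measure β}
    [SFinite ν] {k : α → β → E →L[ℝ] E}
    (hk : AEStronglyMeasurable (Function.uncurry k) (μ.prod ν))
    {u : β → E} (hu : AEStronglyMeasurable u ν) :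
    AEStronglyMeasurable (fun t => ∫ s, k t s (u s) ∂ν) μ :=
  (isBoundedBilinearMap_apply.continuous.comp_aestronglyMeasurable
    (hk.prodMk hu.comp_snd)).integral_prod_right'

theorem setIntegral_mem_insert_zero_smul_closedConvexHull [CompleteSpace E] [IsFiniteMeasure μ]
    {C : Set E} {u : α → E} (hu : Integrable u μ) (huC : ∀ᵐ s ∂μ, u s ∈ C) (A : Set α) :
    ∫ s in A, u s ∂μ ∈ insert 0 (Icc 0 (μ.real univ) • closedConvexHull ℝ C) := by
  by_cases hA : μ A = 0
  · exact mem_insert_iff.2 (.inl (by simp [Measure.restrict_eq_zero.2 hA]))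
  refine mem_insert_of_mem _ ?_
  rw [← measure_smul_setAverage _ (measure_ne_top μ A)]
  exact smul_mem_smul ⟨measureReal_nonneg, measureReal_mono (subset_univ A)⟩
    (convex_closedConvexHull.set_average_mem isClosed_closedConvexHull hA (measure_ne_top μ A)
      (ae_restrict_of_ae (huC.mono fun s hs => subset_closedConvexHull hs)) hu.integrableOn)

theorem integral_simpleFunc_apply_eq_sum [CompleteSpace E] (g : SimpleFunc α (E →L[ℝ] E))
    {u : α → E} (hu : Integrable u μ) :
    ∫ s, g s (u s) ∂μ = ∑ A ∈ g.range, A (∫ s in g ⁻¹' {A}, u s ∂μ) := by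
  have hfiber : ∀ s, g s (u s) = ∑ A ∈ g.range, (g ⁻¹' {A}).indicator (fun s' => A (u s')) s := by
    intro s
    have hoff : ∀ A ∈ g.range, A ≠ g s → (g ⁻¹' {A}).indicator (fun s' => A (u s')) s = 0 :=
      fun A _ hA => indicator_of_notMem (s := g ⁻¹' {A})
        (fun hs => hA (mem_singleton_iff.1 hs).symm) _
    rw [Finset.sum_eq_single_of_mem (g s) (g.mem_range_self s) hoff]
    exact (indicator_of_mem (s := g ⁻¹' {g s}) rfl fun s' => g s (u s')).symm
  simp_rw [hfiber]
  rw [integral_finsetSum _ fun A _ =>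
    (A.integrable_comp hu).indicator (g.measurableSet_fiber A)]
  refine Finset.sum_congr rfl fun A _ => ?_
  rw [integral_indicator (g.measurableSet_fiber A), A.integral_comp_comm hu.integrableOn]

theorem totallyBounded_integral_simpleFunc_apply [CompleteSpace E] [IsFiniteMeasure μ]
    (g : SimpleFunc α (E →L[ℝ] E)) {C : Set E} (hC : IsCompact C) :
    TotallyBounded ((fun u : α → E => ∫ s, g s (u s) ∂μ) ''
      {u | AEStronglyMeasurable u μ ∧ ∀ᵐ s ∂μ, u s ∈ C}) := by
  set D := insert 0 (Icc 0 (μ.real univ) • closedConvexHull ℝ C)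
  have hD : IsCompact D := (isCompact_Icc.smul_set hC.closedConvexHull).insert 0
  set Φ : (g.range → E) → E := fun y => ∑ A : g.range, A.1 (y A)
  have hΦ : Continuous Φ :=
    continuous_finsetSum _ fun A _ => A.1.continuous.comp (continuous_apply A)
  refine ((isCompact_univ_pi fun _ => hD).image hΦ).totallyBounded.subset ?_
  rintro _ ⟨u, ⟨hum, huC⟩, rfl⟩
  obtain ⟨M, hM⟩ := hC.isBounded.exists_norm_le
  have hu : Integrable u μ := .of_bound hum M (huC.mono fun s hs => hM _ hs)
  refine ⟨fun A => ∫ s in g ⁻¹' {A.1}, u s ∂μ, fun A _ =>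
    setIntegral_mem_insert_zero_smul_closedConvexHull hu huC _, ?_⟩
  show _ = ∫ s, g s (u s) ∂μ
  rw [integral_simpleFunc_apply_eq_sum g hu]
  exact Finset.sum_coe_sort g.range fun A => A (∫ s in g ⁻¹' {A}, u s ∂μ)

theorem norm_integral_apply_sub_le [IsFiniteMeasure μ] {f g : α → E →L[ℝ] E}
    (hf : Integrable f μ) (hg : Integrable g μ) {u : α → E} (hum : AEStronglyMeasurable u μ)
    {M : ℝ} (huM : ∀ᵐ s ∂μ, ‖u s‖ ≤ M) :
    ‖∫ s, f s (u s) ∂μ - ∫ s, g s (u s) ∂μ‖ ≤ (∫ s, ‖f s - g s‖ ∂μ) * M := by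
  have hint : ∀ {f : α → E →L[ℝ] E}, Integrable f μ → Integrable (fun s => f s (u s)) μ :=
    fun hf =>
      (ContinuousLinearMap.id ℝ (E →L[ℝ] E)).integrable_of_bilin_of_bdd_right M hf hum huM
  rw [← integral_sub (hint hf) (hint hg), ← integral_mul_const]
  refine norm_integral_le_of_norm_le ((hf.sub hg).norm.mul_const M) ?_
  filter_upwards [huM] with s hs
  calc ‖f s (u s) - g s (u s)‖ = ‖(f s - g s) (u s)‖ := rfl
    _ ≤ ‖f s - g s‖ * ‖u s‖ := (f s - g s).le_opNorm (u s)
    _ ≤ ‖f s - g s‖ * M := by gcongr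

theorem totallyBounded_integral_apply [CompleteSpace E] [IsFiniteMeasure μ]
    {f : α → E →L[ℝ] E} (hf : Integrable f μ) {C : Set E} (hC : IsCompact C) :
    TotallyBounded ((fun u : α → E => ∫ s, f s (u s) ∂μ) ''
      {u | AEStronglyMeasurable u μ ∧ ∀ᵐ s ∂μ, u s ∈ C}) := by
  obtain ⟨M, hM0, hM⟩ := hC.isBounded.exists_pos_norm_le
  refine totallyBounded_of_forall_approx fun ε hε => ?_
  obtain ⟨g, hfg, hg⟩ := (memLp_one_iff_integrable.2 hf).exists_simpleFunc_eLpNorm_sub_lt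
    ENNReal.one_ne_top (ε := ENNReal.ofReal (ε / M)) (by simp [hε, hM0])
  have hg : Integrable g μ := memLp_one_iff_integrable.1 hg
  have hfg : ∫ s, ‖(f - g) s‖ ∂μ < ε / M := by
    rw [integral_norm_eq_lintegral_enorm (hf.sub hg).1, ← eLpNorm_one_eq_lintegral_enorm]
    exact ENNReal.toReal_lt_of_lt_ofReal hfg
  simp only [Pi.sub_apply] at hfg
  refine ⟨_, totallyBounded_integral_simpleFunc_apply (μ := μ) g hC, ?_⟩
  rintro _ ⟨u, hu, rfl⟩
  refine ⟨_, ⟨u, hu, rfl⟩, ?_⟩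
  rw [dist_eq_norm]
  calc _ ≤ (∫ s, ‖f s - g s‖ ∂μ) * M :=
        norm_integral_apply_sub_le hf hg hu.1 (hu.2.mono fun s hs => hM _ hs)
    _ < ε / M * M := by gcongr
    _ = ε := div_mul_cancel₀ ε hM0.ne'

variable {q r : ℝ≥0∞} [Fact (1 ≤ q)] [Fact (1 ≤ r)] [r.HolderConjugate q] [CompleteSpace E]
  {f : α → E →L[ℝ] E}

theorem integral_apply_eq_lpPairing (hf : MemLp f r μ) (u : Lp E q μ) :
    ∫ s, f s (u s) ∂μ = (ContinuousLinearMap.id ℝ (E →L[ℝ] E)).lpPairing μ r q hf.toLp u := by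
  rw [ContinuousLinearMap.lpPairing_eq_integral]
  exact integral_congr_ae (hf.coeFn_toLp.mono fun s hs => by simp [hs])

theorem norm_integral_apply_le (hf : MemLp f r μ) (u : Lp E q μ) :
    ‖∫ s, f s (u s) ∂μ‖ ≤
      ‖(ContinuousLinearMap.id ℝ (E →L[ℝ] E)).lpPairing μ r q‖ * (eLpNorm f r μ).toReal * ‖u‖ := by
  rw [integral_apply_eq_lpPairing hf, ← Lp.norm_toLp f hf]
  exact ContinuousLinearMap.le_opNorm₂ _ _ _

theorem weakConv_integral_apply (hf : MemLp f r μ) {wn : ℕ → Lp E q μ} {w : Lp E q μ}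
    (hweak : WeakConv wn w) :
    WeakConv (fun n => ∫ s, f s (wn n s) ∂μ) (∫ s, f s (w s) ∂μ) := fun φ => by
  simpa [integral_apply_eq_lpPairing hf] using
    hweak (φ ∘L (ContinuousLinearMap.id ℝ (E →L[ℝ] E)).lpPairing μ r q hf.toLp)

end Integrals

theorem statement17_general [CompleteSpace E]
    (T : ℝ) (p q r : ℝ≥0∞) [Fact (1 ≤ p)] [Fact (1 ≤ q)]
    (hp : p ≠ ∞) (hr : q⁻¹ + r⁻¹ = 1)
    (k : ℝ → ℝ → E →L[ℝ] E) (hk : CondK T k p r)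
    (h : Lp E p (μI T))
    (C : Set E) (hC : IsCompact C)
    (wn : ℕ → Lp E q (μI T)) (hwn : ∀ n, ∀ᵐ t ∂(μI T), wn n t ∈ C)
    (w : Lp E q (μI T)) (hweak : WeakConv wn w) :
    Tendsto (fun n => eLpNorm (fun t =>
        (h t + ∫ s, (k t s) (wn n s) ∂(μI T)) - (h t + ∫ s, (k t s) (w s) ∂(μI T)))
      p (μI T)) atTop (𝓝 0) := by
  obtain ⟨hk_meas, hk_mem, hk_norm⟩ := hk
  have : r.HolderConjugate q := ENNReal.holderConjugate_iff.2 (by rwa [add_comm])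
  have : Fact (1 ≤ r) := ⟨ENNReal.HolderConjugate.one_le r q⟩
  have hk_ae : ∀ᵐ t ∂(μI T), MemLp (k t) r (μI T) :=
    ae_restrict_of_forall_mem measurableSet_Icc hk_mem
  obtain ⟨M, hM0, hM⟩ := hC.isBounded.exists_pos_norm_le
  set B := measureUnivNNReal (μI T) ^ q.toReal⁻¹ * M
  have hwn_le : ∀ n, ‖wn n‖ ≤ B := fun n =>
    Lp.norm_le_of_ae_bound hM0.le ((hwn n).mono fun s hs => hM _ hs)
  set P := (ContinuousLinearMap.id ℝ (E →L[ℝ] E)).lpPairing (μI T) r q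
  simp only [add_sub_add_left_eq_sub]
  refine tendsto_eLpNorm_zero_of_dominated Fact.out hp
    (fun n => (aestronglyMeasurable_integral_apply hk_meas (Lp.aestronglyMeasurable _)).sub
      (aestronglyMeasurable_integral_apply hk_meas (Lp.aestronglyMeasurable _)))
    (hk_norm.const_mul (‖P‖ * (B + ‖w‖))) (fun n => ?_) ?_
  · filter_upwards [hk_ae] with t ht
    calc _ ≤ ‖∫ s, k t s (wn n s) ∂(μI T)‖ + ‖∫ s, k t s (w s) ∂(μI T)‖ := norm_sub_le _ _
      _ ≤ ‖P‖ * (eLpNorm (k t) r (μI T)).toReal * ‖wn n‖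
          + ‖P‖ * (eLpNorm (k t) r (μI T)).toReal * ‖w‖ :=
        add_le_add (norm_integral_apply_le ht _) (norm_integral_apply_le ht _)
      _ ≤ _ := by
        rw [← mul_add, mul_assoc, mul_comm (eLpNorm _ _ _).toReal, ← mul_assoc]
        gcongr
        exact hwn_le n
  · filter_upwards [hk_ae] with t ht
    exact tendsto_sub_nhds_zero_iff.2 (tendsto_of_weakConv_of_totallyBounded
      (totallyBounded_integral_apply (ht.integrable Fact.out) hC)
      (fun n => ⟨_, ⟨Lp.aestronglyMeasurable _, hwn n⟩, rfl⟩) (weakConv_integral_apply ht hweak))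

/-- if `C ⊆ E` is norm-compact, the functions `wₙ ∈ L^q(I,E)` take values
a.e. in `C` and `wₙ ⇀ w` weakly in `L^q(I,E)`, then `K(wₙ) → K(w)` in the norm of `L^p(I,E)`,
where `K(w)(t) = h(t) + ∫₀ᵀ k(t,s) w(s) ds`. -/
theorem statement17 [CompleteSpace E]
    (T : ℝ) (hT : 0 < T) (p q r : ℝ≥0∞) [Fact (1 ≤ p)] [Fact (1 ≤ q)]
    (hp : p ≠ ∞) (hq : q ≠ ∞) (hqp : q ≤ p) (hr : q⁻¹ + r⁻¹ = 1)
    (k : ℝ → ℝ → E →L[ℝ] E) (hk : CondK T k p r)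
    (h : Lp E p (μI T))
    (C : Set E) (hC : IsCompact C)
    (wn : ℕ → Lp E q (μI T)) (hwn : ∀ n, ∀ᵐ t ∂(μI T), wn n t ∈ C)
    (w : Lp E q (μI T)) (hweak : WeakConv wn w) :
    Tendsto (fun n => eLpNorm (fun t =>
        (h t + ∫ s, (k t s) (wn n s) ∂(μI T)) - (h t + ∫ s, (k t s) (w s) ∂(μI T)))
      p (μI T)) atTop (𝓝 0) :=
  statement17_general T p q r hp hr k hk h C hC wn hwn w hweak
end
end
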